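/- For every k ≥ 0, let T_k denote the graph with vertices u₀, u₁, …, u_k, countably infinitely many loops at u₀, and exactly one edge from uᵢ to u_{i−1} for each 1 ≤ i ≤ k. Then T_k is move equivalent via the moves (O) and (I-) to T₀, the graph with a single vertex and countably infinitely many loops. -/

import Mathlib

open Classical

/-- A graph in the sense of graph C*-algebras: finitely many vertices,
countably many edges, with source and range maps. -/
structure CKGraph where
  V : Type
  E : Type
  finV : Finite V
  cntE : Countable E
  s : E → V
  r : E → V

attribute [instance] CKGraph.finV CKGraph.cntE

namespace CKGraph

/-- Isomorphism of graphs: bijections on vertices and edges intertwining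
the source and range maps. -/
def Iso (G H : CKGraph) : Prop :=
  ∃ (f : G.V ≃ H.V) (g : G.E ≃ H.E),
    (∀ e, H.s (g e) = f (G.s e)) ∧ (∀ e, H.r (g e) = f (G.r e))

/-- A vertex is a source if it receives no edges. -/
def IsSource (G : CKGraph) (v : G.V) : Prop := ∀ e, G.r e ≠ v

/-- A vertex is a sink if it emits no edges. -/
def IsSink (G : CKGraph) (v : G.V) : Prop := ∀ e, G.s e ≠ v

/-- A vertex is regular if it emits at least one and only finitely many edges. -/
def Regular (G : CKGraph) (v : G.V) : Prop :=
  Nonempty {e : G.E // G.s e = v} ∧ Finite {e : G.E // G.s e = v}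

/-- The outsplit graph of `G` at the vertex `w` with respect to the
partition of `s⁻¹(w)` encoded by `P`. -/
noncomputable def outsplit (G : CKGraph) (w : G.V) (n : ℕ)
    (P : {e : G.E // G.s e = w} → Fin n) : CKGraph where
  V := {v : G.V // v ≠ w} ⊕ Fin n
  E := {e : G.E // G.r e ≠ w} ⊕ ({e : G.E // G.r e = w} × Fin n)
  finV := inferInstance
  cntE := inferInstance
  s := Sum.elim
    (fun e => if h : G.s e.1 = w then Sum.inr (P ⟨e.1, h⟩) else Sum.inl ⟨G.s e.1, h⟩)
    (fun ei => if h : G.s ei.1.1 = w then Sum.inr (P ⟨ei.1.1, h⟩)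
               else Sum.inl ⟨G.s ei.1.1, h⟩)
  r := Sum.elim
    (fun e => Sum.inl ⟨G.r e.1, e.2⟩)
    (fun ei => Sum.inr ei.2)

/-- Move (O): `H` is obtained from `G` by an outsplit at a non-sink `w`
with respect to a partition of `s⁻¹(w)` into nonempty sets, at most one of
which is infinite. -/
def MoveO (G H : CKGraph) : Prop :=
  ∃ (w : G.V) (n : ℕ) (P : {e : G.E // G.s e = w} → Fin n),
    Nonempty {e : G.E // G.s e = w} ∧
    Function.Surjective P ∧
    (∀ i j : Fin n, {e | P e = i}.Infinite → {e | P e = j}.Infinite → i = j) ∧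
    Iso (G.outsplit w n P) H

/-- The insplit graph of `G` at the regular vertex `w` with respect to the
partition of `r⁻¹(w)` (into possibly empty sets) encoded by `P`. -/
noncomputable def insplit (G : CKGraph) (w : G.V) (n : ℕ)
    (P : {e : G.E // G.r e = w} → Fin n) : CKGraph where
  V := {v : G.V // v ≠ w} ⊕ Fin n
  E := {e : G.E // G.s e ≠ w} ⊕ ({e : G.E // G.s e = w} × Fin n)
  finV := inferInstance
  cntE := inferInstance
  s := Sum.elim
    (fun e => Sum.inl ⟨G.s e.1, e.2⟩)
    (fun ei => Sum.inr ei.2)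
  r := Sum.elim
    (fun e => if h : G.r e.1 = w then Sum.inr (P ⟨e.1, h⟩) else Sum.inl ⟨G.r e.1, h⟩)
    (fun ei => if h : G.r ei.1.1 = w then Sum.inr (P ⟨ei.1.1, h⟩)
               else Sum.inl ⟨G.r ei.1.1, h⟩)

/-- Move (I-): `H` is obtained from `G` by an insplit at a regular vertex `w`
with respect to a partition of `r⁻¹(w)` into `n ≥ 1` possibly empty sets. -/
def MoveIm (G H : CKGraph) : Prop :=
  ∃ (w : G.V) (n : ℕ) (P : {e : G.E // G.r e = w} → Fin n),
    G.Regular w ∧ 1 ≤ n ∧ Iso (G.insplit w n P) H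

/-- Move (I+): `G` and `H` are both obtained from a common graph `K` by
insplitting at the same regular vertex via two partitions with the same
number of (possibly empty) sets. -/
def MoveIp (G H : CKGraph) : Prop :=
  ∃ (K : CKGraph) (w : K.V) (n : ℕ)
    (P Q : {e : K.E // K.r e = w} → Fin n),
    K.Regular w ∧ 1 ≤ n ∧
    Iso (K.insplit w n P) G ∧ Iso (K.insplit w n Q) H

/-- The reduced graph of `G` at a regular vertex `w` supporting no loop. -/
noncomputable def reduce (G : CKGraph) (w : G.V) : CKGraph where
  V := {v : G.V // v ≠ w} ⊕ Unit
  E := {e : G.E // G.s e ≠ w ∧ G.r e ≠ w} ⊕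
       (({e : G.E // G.r e = w} × {f : G.E // G.s f = w}) ⊕ {f : G.E // G.s f = w})
  finV := inferInstance
  cntE := inferInstance
  s := Sum.elim
    (fun e => Sum.inl ⟨G.s e.1, e.2.1⟩)
    (Sum.elim
      (fun ef => if h : G.s ef.1.1 = w then Sum.inr () else Sum.inl ⟨G.s ef.1.1, h⟩)
      (fun _ => Sum.inr ()))
  r := Sum.elim
    (fun e => Sum.inl ⟨G.r e.1, e.2.2⟩)
    (Sum.elim
      (fun ef => if h : G.r ef.2.1 = w then Sum.inr () else Sum.inl ⟨G.r ef.2.1, h⟩)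
      (fun f => if h : G.r f.1 = w then Sum.inr () else Sum.inl ⟨G.r f.1, h⟩))

/-- Move (R+): `H` is obtained from `G` by a unital reduction at a regular
vertex `w` which supports no loop. -/
def MoveRp (G H : CKGraph) : Prop :=
  ∃ w : G.V, G.Regular w ∧ (∀ e : G.E, ¬ (G.s e = w ∧ G.r e = w)) ∧
    Iso (G.reduce w) H

/-- Two graphs are move equivalent via the relation `R` (describing the
allowed moves) if there is a finite sequence of graphs starting at the first,
each obtained from the previous by a move in `R` or the inverse of such a
move, and ending at a graph isomorphic to the second. -/
def MoveEquiv (R : CKGraph → CKGraph → Prop) (G H : CKGraph) : Prop :=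
  ∃ K, Relation.ReflTransGen (fun A B => R A B ∨ R B A) G K ∧ Iso K H

/-- The graph `G(c,n)`: a vertex with `c` loops, receiving `n` edges from a
second (source) vertex; for `n = 0` the source vertex is omitted. -/
def Gcn (c n : ℕ) : CKGraph where
  V := Unit ⊕ Fin (min n 1)
  E := Fin c ⊕ Fin n
  finV := inferInstance
  cntE := inferInstance
  s := Sum.elim (fun _ => Sum.inl ()) (fun e => Sum.inr ⟨0, lt_min e.pos one_pos⟩)
  r := fun _ => Sum.inl ()

/-- The graph with adjacency matrix `A` (the `(i,j)` entry being the number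
of edges from vertex `i` to vertex `j`). -/
def adjGraph {k : ℕ} (A : Fin k → Fin k → ℕ) : CKGraph where
  V := Fin k
  E := (i : Fin k) × (j : Fin k) × Fin (A i j)
  finV := inferInstance
  cntE := inferInstance
  s := fun e => e.1
  r := fun e => e.2.1


/-- Entry-wise product of two 2×2 matrices of natural numbers. -/
def matMul (A B : Fin 2 → Fin 2 → ℕ) : Fin 2 → Fin 2 → ℕ := fun i j => ∑ l, A i l * B l j

/-- Matrix-vector product for 2×2 matrices of natural numbers. -/
def matVec (A : Fin 2 → Fin 2 → ℕ) (D : Fin 2 → ℕ) : Fin 2 → ℕ := fun i => ∑ l, A i l * D l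

def T1 : Fin 2 → Fin 2 → ℕ := ![![1, 1], ![0, 1]]

def T2 : Fin 2 → Fin 2 → ℕ := ![![1, 0], ![1, 1]]

/-- The graph represented by the pair `(D, B)`: the graph `Γ(d₁-1, d₂-1; a)`
with `a i j = b j i + δ i j`. -/
def pairGraph (D : Fin 2 → ℕ) (B : Fin 2 → Fin 2 → ℕ) : CKGraph :=
  adjGraph ![![0, D 0 - 1, D 1 - 1], ![0, B 0 0 + 1, B 1 0], ![0, B 0 1, B 1 1 + 1]]

/-- Number of edges emitted by the auxiliary source attached above vertex
`u_t` in the graph `F(n₁,…,n_k)`; here `n t` denotes `n_{t+1}` (0-indexed). -/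
def srcCount (k : ℕ) (n : Fin k → ℕ) (t : Fin k) : ℕ :=
  if t.val + 1 < k then n t - 1 else n t

/-- The graph `F(n₁,…,n_k)` : vertices `u₀,…,u_{k-1}` (`u₀` a sink), one edge
`u_j → u_{j-1}` for `1 ≤ j ≤ k-1`, and for each `t` a source emitting
`srcCount` edges to `u_t` (present only when that count is positive), so that
the number of paths of length `i` ending at `u₀` is `nᵢ`. -/
def Fgraph (k : ℕ) (n : Fin k → ℕ) : CKGraph where
  V := Fin k ⊕ {t : Fin k // 0 < srcCount k n t}
  E := {j : Fin k // 0 < j.val} ⊕ ((t : Fin k) × Fin (srcCount k n t))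
  finV := inferInstance
  cntE := inferInstance
  s := Sum.elim (fun j => Sum.inl j.1) (fun te => Sum.inr ⟨te.1, te.2.pos⟩)
  r := Sum.elim
    (fun j => Sum.inl ⟨j.1.val - 1, lt_of_le_of_lt (Nat.sub_le _ _) j.1.isLt⟩)
    (fun te => Sum.inl te.1)

/-- The graph `E(n₁,…,n_k)` : a cycle `v₀ → v₁ → ⋯ → v_{k-1} → v₀` together
with a single extra vertex emitting `n i` edges to `v i`; the extra vertex is
omitted when all `n i = 0`. -/
def Egraph (k : ℕ) (n : Fin k → ℕ) : CKGraph where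
  V := Fin k ⊕ {_u : Unit // ∃ i, 0 < n i}
  E := Fin k ⊕ ((i : Fin k) × Fin (n i))
  finV := inferInstance
  cntE := inferInstance
  s := Sum.elim (fun j => Sum.inl j) (fun ie => Sum.inr ⟨(), ⟨ie.1, ie.2.pos⟩⟩)
  r := Sum.elim (fun j => Sum.inl ⟨(j.val + 1) % k, Nat.mod_lt _ j.pos⟩)
    (fun ie => Sum.inl ie.1)

/-- The graph `T k` : vertices `u₀,…,u_k`, countably infinitely many loops at
`u₀` and exactly one edge `u_j → u_{j-1}` for `1 ≤ j ≤ k`. -/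
def Tgraph (k : ℕ) : CKGraph where
  V := Fin (k + 1)
  E := ℕ ⊕ {j : Fin (k + 1) // 0 < j.val}
  finV := inferInstance
  cntE := inferInstance
  s := Sum.elim (fun _ => ⟨0, Nat.succ_pos k⟩) (fun j => j.1)
  r := Sum.elim (fun _ => ⟨0, Nat.succ_pos k⟩)
    (fun j => ⟨j.1.val - 1, lt_of_le_of_lt (Nat.sub_le _ _) j.1.isLt⟩)

/-- One-step reachability: there is an edge from `u` to `v`. -/
def Step (G : CKGraph) (u v : G.V) : Prop := ∃ e, G.s e = u ∧ G.r e = v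

/-- There is a (possibly empty) path from `u` to `v`. -/
def Reaches (G : CKGraph) : G.V → G.V → Prop := Relation.ReflTransGen G.Step

/-- `v` lies on a cycle: there is a nontrivial path from `v` back to `v`. -/
def OnCycle (G : CKGraph) (v : G.V) : Prop := ∃ u, G.Step v u ∧ G.Reaches u v

/-- The core of `G`: the vertices lying on cycles if `G` has a cycle, and
otherwise the sinks. -/
def core (G : CKGraph) (v : G.V) : Prop :=
  ((∃ u, G.OnCycle u) → G.OnCycle v) ∧ ((¬ ∃ u, G.OnCycle u) → G.IsSink v)

/-- A transitional vertex: neither a source nor in the core. -/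
def Transitional (G : CKGraph) (v : G.V) : Prop := ¬ G.IsSource v ∧ ¬ G.core v

/-- The core hypotheses: any two vertices on cycles are mutually connected by
paths; if there is a cycle there are no sinks, otherwise there is exactly one
sink; every vertex reaches the core; and every non-core vertex emits only
finitely many edges. -/
structure CoreHyp (G : CKGraph) : Prop where
  conn : ∀ u v, G.OnCycle u → G.OnCycle v → G.Reaches u v
  noSinks : (∃ v, G.OnCycle v) → ∀ v, ¬ G.IsSink v
  uniqueSink : (¬ ∃ v, G.OnCycle v) → ∃! v, G.IsSink v
  reach : ∀ v, ∃ c, G.core c ∧ G.Reaches v c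
  finEmit : ∀ v, ¬ G.core v → Finite {e : G.E // G.s e = v}

/-- The core subgraph: core vertices together with all edges between them. -/
def coreSubgraph (G : CKGraph) : CKGraph where
  V := {v : G.V // G.core v}
  E := {e : G.E // G.core (G.s e) ∧ G.core (G.r e)}
  finV := inferInstance
  cntE := inferInstance
  s := fun e => ⟨G.s e.1, e.2.1⟩
  r := fun e => ⟨G.r e.1, e.2.2⟩

end CKGraph

open CKGraph

namespace CKGraph

lemma iso_refl (G : CKGraph) : Iso G G :=
  ⟨Equiv.refl _, Equiv.refl _, fun _ => rfl, fun _ => rfl⟩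

lemma iso_symm {G H : CKGraph} (h : Iso G H) : Iso H G := by
  obtain ⟨f, g, hs, hr⟩ := h
  refine ⟨f.symm, g.symm, fun e => ?_, fun e => ?_⟩
  · apply f.injective
    rw [Equiv.apply_symm_apply, ← hs, Equiv.apply_symm_apply]
  · apply f.injective
    rw [Equiv.apply_symm_apply, ← hr, Equiv.apply_symm_apply]

/-- The auxiliary graph `D(m,t)`: vertices `v₀ = a₀, a₁, …, a_{m+1}` and tail
vertices `u₁, …, u_t`; edges: for each `i : Fin (m+2)` infinitely many edges
`v₀ → a_i`; chain edges `a_{j+1} → a_j`; a loop at `a_{m+1}`; and a tail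
`u_t → ⋯ → u_1 → a_{m+1}`. -/
def Dg (m t : ℕ) : CKGraph where
  V := Fin (m + 2) ⊕ Fin t
  E := (Fin (m + 2) × ℕ) ⊕ (Fin (m + 1) ⊕ (Unit ⊕ Fin t))
  finV := inferInstance
  cntE := inferInstance
  s := fun e => match e with
    | .inl _ => .inl ⟨0, by omega⟩
    | .inr (.inl j) => .inl ⟨j.val + 1, by omega⟩
    | .inr (.inr (.inl _)) => .inl ⟨m + 1, by omega⟩
    | .inr (.inr (.inr j)) => .inr j
  r := fun e => match e with
    | .inl (i, _) => .inl i
    | .inr (.inl j) => .inl ⟨j.val, by omega⟩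
    | .inr (.inr (.inl _)) => .inl ⟨m + 1, by omega⟩
    | .inr (.inr (.inr j)) =>
        if j.val = 0 then .inl ⟨m + 1, by omega⟩ else .inr ⟨j.val - 1, by omega⟩

/-- The top vertex `a_{m+1}` of `D(m,t)`. -/
def wD (m t : ℕ) : (Dg m t).V := .inl ⟨m + 1, by omega⟩

/-- The outsplit partition at the top of `D(m,t)`: the chain edge goes to
class 0, the loop to class 1. -/
def PO (m t : ℕ) : {e : (Dg m t).E // (Dg m t).s e = wD m t} → Fin 2 :=
  fun e => match e.1 with
  | .inr (.inr (.inl _)) => 1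
  | _ => 0

/-- The insplit partition at the top of `D(m,t)`: the tail edge goes to
class 1, everything else to class 0. -/
def QI (m t : ℕ) : {e : (Dg m t).E // (Dg m t).r e = wD m t} → Fin 2 :=
  fun e => match e.1 with
  | .inr (.inr (.inr _)) => 1
  | _ => 0

/-- The base vertex `u₀` of `T_k`. -/
def w0 (k : ℕ) : (Tgraph k).V := ⟨0, by omega⟩

/-- The outsplit partition at `u₀` of `T_k`: loop number `0` goes to class 1,
all other loops to class 0. -/
def PT (k : ℕ) : {e : (Tgraph k).E // (Tgraph k).s e = w0 k} → Fin 2 :=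
  fun e => match e.1 with
  | .inl 0 => 1
  | _ => 0

end CKGraph
namespace CKGraph

def elimT0 {α : Sort*} {k : ℕ} (j : {j : Fin (k+1) // 0 < j.val}) (hk : k = 0) : α :=
  absurd j.2 (by have := j.1.isLt; omega)

def vT0eq (v : (Tgraph 0).V) : v = w0 0 := Fin.ext (by have := v.isLt; omega)

def vDfun : ((Tgraph 0).outsplit (w0 0) 2 (PT 0)).V → (Dg 0 0).V := fun v =>
  match v with
  | .inl ⟨v, h⟩ => absurd (vT0eq v) h
  | .inr b => .inl ⟨b.val, by omega⟩

def vDinv : (Dg 0 0).V → ((Tgraph 0).outsplit (w0 0) 2 (PT 0)).V := fun v =>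
  match v with
  | .inl i => .inr ⟨i.val, i.isLt⟩
  | .inr j => j.elim0

def eDfun : ((Tgraph 0).outsplit (w0 0) 2 (PT 0)).E → (Dg 0 0).E := fun e =>
  match e with
  | .inl ⟨.inl _, h⟩ => absurd rfl h
  | .inl ⟨.inr j, _⟩ => elimT0 j rfl
  | .inr (⟨.inl 0, _⟩, ⟨0, _⟩) => .inr (.inl ⟨0, by omega⟩)
  | .inr (⟨.inl 0, _⟩, ⟨_+1, _⟩) => .inr (.inr (.inl ()))
  | .inr (⟨.inl (n+1), _⟩, b) => .inl (⟨b.val, by omega⟩, n)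
  | .inr (⟨.inr j, _⟩, _) => elimT0 j rfl

def eDinv : (Dg 0 0).E → ((Tgraph 0).outsplit (w0 0) 2 (PT 0)).E := fun e =>
  match e with
  | .inl (i, n) => .inr (⟨.inl (n+1), rfl⟩, ⟨i.val, by omega⟩)
  | .inr (.inl _) => .inr (⟨.inl 0, rfl⟩, 0)
  | .inr (.inr (.inl _)) => .inr (⟨.inl 0, rfl⟩, 1)
  | .inr (.inr (.inr j)) => j.elim0

lemma isoD : Iso ((Tgraph 0).outsplit (w0 0) 2 (PT 0)) (Dg 0 0) := by
  refine ⟨⟨vDfun, vDinv, ?_, ?_⟩, ⟨eDfun, eDinv, ?_, ?_⟩, ?_, ?_⟩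
  · rintro (⟨v, h⟩ | b)
    · exact absurd (vT0eq v) h
    · rfl
  · rintro (i | j)
    · rfl
    · exact j.elim0
  · rintro (⟨(n | j), h⟩ | ⟨⟨(n | j), he⟩, b⟩)
    · exact absurd rfl h
    · exact elimT0 j rfl
    · rcases b with ⟨bv, hb⟩
      match n, bv, hb with
      | 0, 0, _ => rfl
      | 0, 1, _ => rfl
      | n+1, bv, hb => rfl
    · exact elimT0 j rfl
  · rintro (⟨i, n⟩ | (j | (u | j)))
    · rfl
    · have hj : j = ⟨0, by omega⟩ := Fin.ext (by have := j.isLt; omega)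
      rw [hj]; rfl
    · rfl
    · exact j.elim0
  · rintro (⟨(n | j), h⟩ | ⟨⟨(n | j), he⟩, b⟩)
    · exact absurd rfl h
    · exact elimT0 j rfl
    · show (Dg 0 0).s (eDfun _) = vDfun (if h : (Tgraph 0).s (.inl n) = w0 0
        then .inr (PT 0 ⟨.inl n, h⟩) else .inl ⟨(Tgraph 0).s (.inl n), h⟩)
      erw [dif_pos (show (Tgraph 0).s (Sum.inl n) = w0 0 from rfl)]
      rcases b with ⟨bv, hb⟩
      match n, bv, hb with
      | 0, 0, _ => rfl
      | 0, 1, _ => rfl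
      | n+1, bv, hb => rfl
    · exact elimT0 j rfl
  · rintro (⟨(n | j), h⟩ | ⟨⟨(n | j), he⟩, b⟩)
    · exact absurd rfl h
    · exact elimT0 j rfl
    · rcases b with ⟨bv, hb⟩
      match n, bv, hb with
      | 0, 0, _ => rfl
      | 0, 1, _ => rfl
      | n+1, bv, hb => rfl
    · exact elimT0 j rfl

end CKGraph
namespace CKGraph

lemma inlNe {m t : ℕ} {a : ℕ} (ha : a < m + 2) (h : a ≠ m + 1) :
    (Sum.inl ⟨a, ha⟩ : (Dg m t).V) ≠ wD m t := by
  simp only [wD, ne_eq, Sum.inl.injEq, Fin.mk.injEq]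
  exact h

lemma inlEq {m t : ℕ} {a : ℕ} (ha : a < m + 2) (h : a = m + 1) :
    (Sum.inl ⟨a, ha⟩ : (Dg m t).V) = wD m t := by
  rw [wD]; exact congrArg Sum.inl (Fin.ext h)

lemma chainR_ne {m t : ℕ} (j : Fin (m + 1)) :
    (Dg m t).r (.inr (.inl j)) ≠ wD m t := by
  have := j.isLt
  show (Sum.inl ⟨j.val, by omega⟩ : (Dg m t).V) ≠ wD m t
  exact inlNe _ (by omega)

def vCfun (m : ℕ) : ((Dg m 0).outsplit (wD m 0) 2 (PO m 0)).V → (Dg (m+1) 0).V := fun v =>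
  match v with
  | .inl ⟨.inl i, _⟩ => .inl ⟨i.val, by have := i.isLt; omega⟩
  | .inl ⟨.inr j, _⟩ => j.elim0
  | .inr b => .inl ⟨m + 1 + b.val, by have := b.isLt; omega⟩

def vCinv (m : ℕ) : (Dg (m+1) 0).V → ((Dg m 0).outsplit (wD m 0) 2 (PO m 0)).V := fun v =>
  match v with
  | .inl i => if h : i.val ≤ m then .inl ⟨.inl ⟨i.val, by omega⟩, inlNe _ (by omega)⟩
      else .inr ⟨i.val - (m+1), by have := i.isLt; omega⟩
  | .inr j => j.elim0

def eCfun (m : ℕ) : ((Dg m 0).outsplit (wD m 0) 2 (PO m 0)).E → (Dg (m+1) 0).E := fun e =>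
  match e with
  | .inl ⟨.inl (i, n), _⟩ => .inl (⟨i.val, by have := i.isLt; omega⟩, n)
  | .inl ⟨.inr (.inl j), _⟩ => .inr (.inl ⟨j.val, by have := j.isLt; omega⟩)
  | .inl ⟨.inr (.inr (.inl _)), h⟩ => absurd rfl h
  | .inl ⟨.inr (.inr (.inr j)), _⟩ => j.elim0
  | .inr (⟨.inl (i, n), _⟩, b) => .inl (⟨m + 1 + b.val, by have := b.isLt; omega⟩, n)
  | .inr (⟨.inr (.inl j), h⟩, b) => absurd h (chainR_ne j)
  | .inr (⟨.inr (.inr (.inl _)), _⟩, ⟨0, _⟩) => .inr (.inl ⟨m + 1, by omega⟩)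
  | .inr (⟨.inr (.inr (.inl _)), _⟩, ⟨_+1, _⟩) => .inr (.inr (.inl ()))
  | .inr (⟨.inr (.inr (.inr j)), _⟩, _) => j.elim0

def eCinv (m : ℕ) : (Dg (m+1) 0).E → ((Dg m 0).outsplit (wD m 0) 2 (PO m 0)).E := fun e =>
  match e with
  | .inl (i, n) => if h : i.val ≤ m then
        .inl ⟨.inl (⟨i.val, by omega⟩, n), inlNe _ (by omega)⟩
      else .inr (⟨.inl (⟨m + 1, by omega⟩, n), rfl⟩, ⟨i.val - (m+1), by have := i.isLt; omega⟩)
  | .inr (.inl j) => if h : j.val ≤ m then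
        .inl ⟨.inr (.inl ⟨j.val, by omega⟩), chainR_ne _⟩
      else .inr (⟨.inr (.inr (.inl ())), rfl⟩, 0)
  | .inr (.inr (.inl _)) => .inr (⟨.inr (.inr (.inl ())), rfl⟩, 1)
  | .inr (.inr (.inr j)) => j.elim0

lemma isoC (m : ℕ) : Iso ((Dg m 0).outsplit (wD m 0) 2 (PO m 0)) (Dg (m+1) 0) := by
  have hval : ∀ i : Fin (m+2), (Sum.inl i : (Dg m 0).V) ≠ wD m 0 → i.val ≠ m + 1 := by
    intro i h hv
    exact h (by rw [show i = ⟨m+1, by omega⟩ from Fin.ext hv]; exact inlEq _ rfl)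
  refine ⟨⟨vCfun m, vCinv m, ?_, ?_⟩, ⟨eCfun m, eCinv m, ?_, ?_⟩, ?_, ?_⟩
  · -- vertices: left inverse
    rintro (⟨(i | j), h⟩ | ⟨bv, hb⟩)
    · have hi : i.val ≤ m := by have := i.isLt; have := hval i h; omega
      show vCinv m (.inl ⟨i.val, _⟩) = _
      simp only [vCinv]
      erw [dif_pos (show (⟨i.val, by omega⟩ : Fin (m+3)).val ≤ m from hi)]
    · exact j.elim0
    · show vCinv m (.inl ⟨m + 1 + bv, _⟩) = _
      simp only [vCinv]
      erw [dif_neg (show ¬ (⟨m + 1 + bv, by omega⟩ : Fin (m+3)).val ≤ m by show ¬ m+1+bv ≤ m; omega)]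
      exact congrArg Sum.inr (Fin.ext (show m + 1 + bv - (m+1) = bv by omega))
  · -- vertices: right inverse
    rintro (i | j)
    · simp only [vCinv]
      by_cases hi : i.val ≤ m
      · erw [dif_pos hi]; rfl
      · erw [dif_neg hi]
        exact congrArg Sum.inl (Fin.ext (show m + 1 + (i.val - (m+1)) = i.val by
          have := i.isLt; omega))
    · exact j.elim0
  · -- edges: left inverse
    rintro (⟨(⟨i, n⟩ | (j | (u | j))), h⟩ | ⟨⟨(⟨i, n⟩ | (j | (u | j))), he⟩, bv, hb⟩)
    · have hi : i.val ≤ m := by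
        have := i.isLt
        have : i.val ≠ m + 1 := fun hv => h (inlEq _ hv)
        omega
      show eCinv m (.inl (⟨i.val, _⟩, n)) = _
      simp only [eCinv]
      erw [dif_pos (show (⟨i.val, by omega⟩ : Fin (m+3)).val ≤ m from hi)]
    · have hj : j.val ≤ m := by have := j.isLt; omega
      show eCinv m (.inr (.inl ⟨j.val, _⟩)) = _
      simp only [eCinv]
      erw [dif_pos (show (⟨j.val, by omega⟩ : Fin (m+2)).val ≤ m from hj)]
    · exact absurd rfl h
    · exact j.elim0
    · have hi : i = ⟨m+1, by omega⟩ := by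
        have h2 : (Sum.inl i : (Dg m 0).V) = wD m 0 := he
        rw [wD] at h2
        injection h2
      subst hi
      show eCinv m (.inl (⟨m + 1 + bv, _⟩, n)) = _
      simp only [eCinv]
      erw [dif_neg (show ¬ (⟨m + 1 + bv, by omega⟩ : Fin (m+3)).val ≤ m by
        show ¬ m+1+bv ≤ m; omega)]
      refine congrArg Sum.inr (Prod.ext rfl (Fin.ext ?_))
      show m + 1 + bv - (m + 1) = bv
      omega
    · exact absurd he (chainR_ne j)
    · match bv, hb with
      | 0, hb =>
        show eCinv m (.inr (.inl ⟨m+1, _⟩)) = _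
        simp only [eCinv]
        erw [dif_neg (show ¬ (⟨m+1, by omega⟩ : Fin (m+2)).val ≤ m by show ¬ m+1 ≤ m; omega)]
        rfl
      | 1, hb => rfl
    · exact j.elim0
  · -- edges: right inverse
    rintro (⟨i, n⟩ | (j | (u | j)))
    · simp only [eCinv]
      by_cases hi : i.val ≤ m
      · erw [dif_pos hi]; rfl
      · erw [dif_neg hi]
        refine congrArg Sum.inl (Prod.ext (Fin.ext ?_) rfl)
        show m + 1 + (i.val - (m+1)) = i.val
        have := i.isLt; omega
    · simp only [eCinv]
      by_cases hj : j.val ≤ m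
      · erw [dif_pos hj]; rfl
      · erw [dif_neg hj]
        refine congrArg (fun x => Sum.inr (Sum.inl x)) (Fin.ext ?_)
        show m + 1 = j.val
        have := j.isLt; omega
    · rfl
    · exact j.elim0
  · -- s intertwine
    rintro (⟨(⟨i, n⟩ | (j | (u | j))), h⟩ | ⟨⟨(⟨i, n⟩ | (j | (u | j))), he⟩, bv, hb⟩)
    · show _ = vCfun m (if h2 : (Dg m 0).s (.inl (i, n)) = wD m 0 then _ else _)
      rcases Classical.em ((Dg m 0).s (.inl (i, n)) = wD m 0) with h2 | h2
      · exact absurd h2 (inlNe _ (by omega))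
      · erw [dif_neg h2]; rfl
    · show _ = vCfun m (if h2 : (Dg m 0).s (.inr (.inl j)) = wD m 0 then _ else _)
      rcases Classical.em ((Dg m 0).s (.inr (.inl j)) = wD m 0) with h2 | h2
      · erw [dif_pos h2]
        have h3 : (Sum.inl (⟨j.val + 1, by have := j.isLt; omega⟩ : Fin (m+2))
            : (Dg m 0).V) = wD m 0 := h2
        rw [wD] at h3
        injection h3 with h4
        injection h4 with h5
        exact congrArg Sum.inl (Fin.ext (show j.val + 1 = m + 1 + 0 by omega))
      · erw [dif_neg h2]; rfl
    · exact absurd rfl h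
    · exact j.elim0
    · show _ = vCfun m (if h2 : (Dg m 0).s (.inl (i, n)) = wD m 0 then _ else _)
      rcases Classical.em ((Dg m 0).s (.inl (i, n)) = wD m 0) with h2 | h2
      · exact absurd h2 (inlNe _ (by omega))
      · erw [dif_neg h2]; rfl
    · exact absurd he (chainR_ne j)
    · show _ = vCfun m (if h2 : (Dg m 0).s (.inr (.inr (.inl u))) = wD m 0 then _ else _)
      rcases Classical.em ((Dg m 0).s (.inr (.inr (.inl u))) = wD m 0) with h2 | h2
      · erw [dif_pos h2]
        match bv, hb with
        | 0, hb => rfl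
        | 1, hb => rfl
      · exact absurd (inlEq (a := m+1) (by omega) rfl) h2
    · exact j.elim0
  · -- r intertwine
    rintro (⟨(⟨i, n⟩ | (j | (u | j))), h⟩ | ⟨⟨(⟨i, n⟩ | (j | (u | j))), he⟩, bv, hb⟩)
    · rfl
    · rfl
    · exact absurd rfl h
    · exact j.elim0
    · rfl
    · exact absurd he (chainR_ne j)
    · match bv, hb with
      | 0, hb => exact congrArg Sum.inl (Fin.ext (show m+1 = m+1+0 by omega))
      | 1, hb => rfl
    · exact j.elim0

end CKGraph
namespace CKGraph

section access
variable (G : CKGraph) (w : G.V) (n : ℕ) (P : {e : G.E // G.s e = w} → Fin n)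

lemma outsplit_s_inl_pos (e : G.E) (h : G.r e ≠ w) (hw : G.s e = w) :
    (G.outsplit w n P).s (.inl ⟨e, h⟩) = .inr (P ⟨e, hw⟩) := dif_pos hw

lemma outsplit_s_inl_neg (e : G.E) (h : G.r e ≠ w) (hw : G.s e ≠ w) :
    (G.outsplit w n P).s (.inl ⟨e, h⟩) = .inl ⟨G.s e, hw⟩ := dif_neg hw

lemma outsplit_s_inr_pos (e : G.E) (he : G.r e = w) (b : Fin n) (hw : G.s e = w) :
    (G.outsplit w n P).s (.inr (⟨e, he⟩, b)) = .inr (P ⟨e, hw⟩) := dif_pos hw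

lemma outsplit_s_inr_neg (e : G.E) (he : G.r e = w) (b : Fin n) (hw : G.s e ≠ w) :
    (G.outsplit w n P).s (.inr (⟨e, he⟩, b)) = .inl ⟨G.s e, hw⟩ := dif_neg hw

end access

section access2
variable (G : CKGraph) (w : G.V) (n : ℕ) (Q : {e : G.E // G.r e = w} → Fin n)

lemma insplit_r_inl_pos (e : G.E) (h : G.s e ≠ w) (hw : G.r e = w) :
    (G.insplit w n Q).r (.inl ⟨e, h⟩) = .inr (Q ⟨e, hw⟩) := dif_pos hw

lemma insplit_r_inl_neg (e : G.E) (h : G.s e ≠ w) (hw : G.r e ≠ w) :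
    (G.insplit w n Q).r (.inl ⟨e, h⟩) = .inl ⟨G.r e, hw⟩ := dif_neg hw

lemma insplit_r_inr_pos (e : G.E) (he : G.s e = w) (b : Fin n) (hw : G.r e = w) :
    (G.insplit w n Q).r (.inr (⟨e, he⟩, b)) = .inr (Q ⟨e, hw⟩) := dif_pos hw

lemma insplit_r_inr_neg (e : G.E) (he : G.s e = w) (b : Fin n) (hw : G.r e ≠ w) :
    (G.insplit w n Q).r (.inr (⟨e, he⟩, b)) = .inl ⟨G.r e, hw⟩ := dif_neg hw

end access2

/- value lemmas for Dg -/
section dgval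
variable {m t : ℕ}

lemma inrVNe (j : Fin t) : (Sum.inr j : (Dg m t).V) ≠ wD m t := by simp [wD]

lemma inlW_val {i : Fin (m+2)} (h : (Sum.inl i : (Dg m t).V) = wD m t) : i.val = m + 1 := by
  rw [wD] at h
  injection h with h2
  exact congrArg Fin.val h2

lemma HS_ne (i : Fin (m+2)) (n : ℕ) : (Dg m t).s (.inl (i, n)) ≠ wD m t :=
  inlNe (a := 0) (by omega) (by omega)

lemma HR_ne (i : Fin (m+2)) (n : ℕ) (hi : i.val ≠ m + 1) :
    (Dg m t).r (.inl (i, n)) ≠ wD m t :=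
  fun hc => hi (inlW_val hc)

lemma HR_eq (i : Fin (m+2)) (n : ℕ) (hi : i.val = m + 1) :
    (Dg m t).r (.inl (i, n)) = wD m t := by
  show (Sum.inl i : (Dg m t).V) = wD m t
  rw [show i = ⟨m+1, by omega⟩ from Fin.ext hi]; rfl

lemma chainS_ne (j : Fin (m+1)) (hj : j.val ≠ m) : (Dg m t).s (.inr (.inl j)) ≠ wD m t :=
  inlNe (a := j.val + 1) (by have := j.isLt; omega) (by omega)

lemma chainS_eq (j : Fin (m+1)) (hj : j.val = m) : (Dg m t).s (.inr (.inl j)) = wD m t :=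
  inlEq (a := j.val + 1) (by have := j.isLt; omega) (by omega)

lemma chainS_val (j : Fin (m+1)) (h : (Dg m t).s (.inr (.inl j)) = wD m t) : j.val = m := by
  have h2 : (Sum.inl (⟨j.val + 1, by have := j.isLt; omega⟩ : Fin (m+2)) : (Dg m t).V)
      = wD m t := h
  have h3 : j.val + 1 = m + 1 := inlW_val h2
  omega

lemma loopS_eq (u : Unit) : (Dg m t).s (.inr (.inr (.inl u))) = wD m t := rfl

lemma loopR_eq (u : Unit) : (Dg m t).r (.inr (.inr (.inl u))) = wD m t := rfl

lemma tailS_ne (j : Fin t) : (Dg m t).s (.inr (.inr (.inr j))) ≠ wD m t := inrVNe j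

lemma tailR_eq0 (j : Fin t) (hj : j.val = 0) :
    (Dg m t).r (.inr (.inr (.inr j))) = wD m t := by
  rcases t with _ | t'
  · exact j.elim0
  · have h2 : j = ⟨0, Nat.succ_pos t'⟩ := Fin.ext hj
    subst h2
    rfl

lemma tailR_ne (j : Fin t) (hj : j.val ≠ 0) :
    (Dg m t).r (.inr (.inr (.inr j))) ≠ wD m t := by
  intro hc
  rw [show (Dg m t).r (.inr (.inr (.inr j))) = if j.val = 0 then Sum.inl ⟨m+1, by omega⟩
      else Sum.inr ⟨j.val - 1, by have := j.isLt; omega⟩ from rfl, if_neg hj, wD] at hc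
  cases hc

lemma tailR_val (j : Fin t) (h : (Dg m t).r (.inr (.inr (.inr j))) = wD m t) : j.val = 0 := by
  by_contra hc
  exact tailR_ne j hc h

end dgval

end CKGraph
namespace CKGraph

def vBfun (m t : ℕ) : ((Dg m (t+1)).outsplit (wD m (t+1)) 2 (PO m (t+1))).V →
    ((Dg (m+1) t).insplit (wD (m+1) t) 2 (QI (m+1) t)).V := fun v =>
  match v with
  | .inl ⟨.inl i, _⟩ =>
      .inl ⟨.inl ⟨i.val, by have := i.isLt; omega⟩, inlNe (by have := i.isLt; omega) (by have := i.isLt; omega)⟩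
  | .inl ⟨.inr ⟨0, _⟩, _⟩ => .inr 1
  | .inl ⟨.inr ⟨jv+1, hj⟩, _⟩ => .inl ⟨.inr ⟨jv, by omega⟩, inrVNe _⟩
  | .inr ⟨0, _⟩ => .inl ⟨.inl ⟨m+1, by omega⟩, inlNe (by omega) (by omega)⟩
  | .inr ⟨_+1, _⟩ => .inr 0

def vBinv (m t : ℕ) : ((Dg (m+1) t).insplit (wD (m+1) t) 2 (QI (m+1) t)).V →
    ((Dg m (t+1)).outsplit (wD m (t+1)) 2 (PO m (t+1))).V := fun v =>
  match v with
  | .inl ⟨.inl i, _⟩ =>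
      if hi : i.val ≤ m then .inl ⟨.inl ⟨i.val, by omega⟩, inlNe (by omega) (by omega)⟩
      else .inr 0
  | .inl ⟨.inr j, _⟩ => .inl ⟨.inr ⟨j.val + 1, by have := j.isLt; omega⟩, inrVNe _⟩
  | .inr ⟨0, _⟩ => .inr 1
  | .inr ⟨_+1, _⟩ => .inl ⟨.inr ⟨0, by omega⟩, inrVNe _⟩

def eBfun (m t : ℕ) : ((Dg m (t+1)).outsplit (wD m (t+1)) 2 (PO m (t+1))).E →
    ((Dg (m+1) t).insplit (wD (m+1) t) 2 (QI (m+1) t)).E := fun e =>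
  match e with
  | .inl ⟨.inl (i, n), _⟩ =>
      .inl ⟨.inl (⟨i.val, by have := i.isLt; omega⟩, n), HS_ne _ _⟩
  | .inl ⟨.inr (.inl j), _⟩ =>
      .inl ⟨.inr (.inl ⟨j.val, by have := j.isLt; omega⟩),
        chainS_ne _ (by have := j.isLt; show ¬ j.val = m + 1; omega)⟩
  | .inl ⟨.inr (.inr (.inl _)), h⟩ => absurd rfl h
  | .inl ⟨.inr (.inr (.inr ⟨0, h0⟩)), h⟩ => absurd (tailR_eq0 _ rfl) h
  | .inl ⟨.inr (.inr (.inr ⟨jv+1, hj⟩)), h⟩ =>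
      .inl ⟨.inr (.inr (.inr ⟨jv, by omega⟩)), tailS_ne _⟩
  | .inr (⟨.inl (i, n), he⟩, ⟨0, _⟩) =>
      .inl ⟨.inl (⟨m + 1, by omega⟩, n), HS_ne _ _⟩
  | .inr (⟨.inl (i, n), he⟩, ⟨_+1, _⟩) =>
      .inl ⟨.inl (⟨m + 2, by omega⟩, n), HS_ne _ _⟩
  | .inr (⟨.inr (.inl j), he⟩, _) => absurd he (chainR_ne j)
  | .inr (⟨.inr (.inr (.inl _)), _⟩, ⟨0, _⟩) =>
      .inr (⟨.inr (.inl ⟨m+1, by omega⟩), chainS_eq _ rfl⟩, 0)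
  | .inr (⟨.inr (.inr (.inl _)), _⟩, ⟨_+1, _⟩) =>
      .inr (⟨.inr (.inr (.inl ())), rfl⟩, 0)
  | .inr (⟨.inr (.inr (.inr j)), _⟩, ⟨0, _⟩) =>
      .inr (⟨.inr (.inl ⟨m+1, by omega⟩), chainS_eq _ rfl⟩, 1)
  | .inr (⟨.inr (.inr (.inr j)), _⟩, ⟨_+1, _⟩) =>
      .inr (⟨.inr (.inr (.inl ())), rfl⟩, 1)

def eBinv (m t : ℕ) : ((Dg (m+1) t).insplit (wD (m+1) t) 2 (QI (m+1) t)).E →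
    ((Dg m (t+1)).outsplit (wD m (t+1)) 2 (PO m (t+1))).E := fun e =>
  match e with
  | .inl ⟨.inl (i, n), _⟩ =>
      if hi : i.val ≤ m then .inl ⟨.inl (⟨i.val, by omega⟩, n), HR_ne _ n (by show ¬ i.val = m+1; omega)⟩
      else if hi2 : i.val = m + 1 then .inr (⟨.inl (⟨m+1, by omega⟩, n), HR_eq _ n rfl⟩, 0)
      else .inr (⟨.inl (⟨m+1, by omega⟩, n), HR_eq _ n rfl⟩, 1)
  | .inl ⟨.inr (.inl j), h⟩ =>
      if hj : j.val ≤ m then .inl ⟨.inr (.inl ⟨j.val, by omega⟩), chainR_ne _⟩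
      else absurd (chainS_eq j (by have := j.isLt; omega)) h
  | .inl ⟨.inr (.inr (.inl u)), h⟩ => absurd (loopS_eq u) h
  | .inl ⟨.inr (.inr (.inr j)), _⟩ =>
      .inl ⟨.inr (.inr (.inr ⟨j.val + 1, by have := j.isLt; omega⟩)),
        tailR_ne _ (by show ¬ j.val + 1 = 0; omega)⟩
  | .inr (⟨.inl (i, n), hs⟩, _) => absurd hs (HS_ne _ _)
  | .inr (⟨.inr (.inl j), hs⟩, ⟨0, _⟩) => .inr (⟨.inr (.inr (.inl ())), loopR_eq ()⟩, 0)
  | .inr (⟨.inr (.inl j), hs⟩, ⟨_+1, _⟩) =>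
      .inr (⟨.inr (.inr (.inr ⟨0, by omega⟩)), tailR_eq0 _ rfl⟩, 0)
  | .inr (⟨.inr (.inr (.inl _)), _⟩, ⟨0, _⟩) => .inr (⟨.inr (.inr (.inl ())), loopR_eq ()⟩, 1)
  | .inr (⟨.inr (.inr (.inl _)), _⟩, ⟨_+1, _⟩) =>
      .inr (⟨.inr (.inr (.inr ⟨0, by omega⟩)), tailR_eq0 _ rfl⟩, 1)
  | .inr (⟨.inr (.inr (.inr j)), hs⟩, _) => absurd hs (tailS_ne _)

set_option maxHeartbeats 2000000 in
lemma isoB (m t : ℕ) :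
    Iso ((Dg m (t+1)).outsplit (wD m (t+1)) 2 (PO m (t+1)))
        ((Dg (m+1) t).insplit (wD (m+1) t) 2 (QI (m+1) t)) := by
  refine ⟨⟨vBfun m t, vBinv m t, ?_, ?_⟩, ⟨eBfun m t, eBinv m t, ?_, ?_⟩, ?_, ?_⟩
  · -- vertex left inverse
    rintro (⟨(i | ⟨jv, hj⟩), h⟩ | ⟨bv, hb⟩)
    · have hv : i.val ≠ m + 1 := fun hv => h (inlEq i.isLt hv)
      show vBinv m t (.inl ⟨.inl ⟨i.val, _⟩, _⟩) = _
      simp only [vBinv]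
      erw [dif_pos (show (⟨i.val, by have := i.isLt; omega⟩ : Fin (m+3)).val ≤ m by
        show i.val ≤ m; have := i.isLt; omega)]
    · match jv, hj with
      | 0, hj => rfl
      | jv+1, hj => rfl
    · match bv, hb with
      | 0, hb =>
        show vBinv m t (.inl ⟨.inl ⟨m+1, _⟩, _⟩) = _
        simp only [vBinv]
        erw [dif_neg (show ¬ (⟨m+1, by omega⟩ : Fin (m+3)).val ≤ m by show ¬ m+1 ≤ m; omega)]
        rfl
      | 1, hb => rfl
  · -- vertex right inverse
    rintro (⟨(i | j), h⟩ | ⟨cv, hc⟩)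
    · simp only [vBinv]
      by_cases hi : i.val ≤ m
      · erw [dif_pos hi]; rfl
      · erw [dif_neg hi]
        have hv : i.val ≠ m + 2 := fun hv => h (inlEq i.isLt hv)
        exact congrArg Sum.inl (Subtype.ext (congrArg Sum.inl
          (Fin.ext (show m + 1 = i.val by have := i.isLt; omega))))
    · rfl
    · match cv, hc with
      | 0, hc => rfl
      | 1, hc => rfl
  · -- edge left inverse
    rintro (⟨(⟨i, n⟩ | (j | (u | ⟨jv, hjv⟩))), h⟩ | ⟨⟨(⟨i, n⟩ | (j | (u | j))), he⟩, bv, hb⟩)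
    · have hv : i.val ≠ m + 1 := fun hv => h (HR_eq i n hv)
      show eBinv m t (.inl ⟨.inl (⟨i.val, _⟩, n), _⟩) = _
      simp only [eBinv]
      erw [dif_pos (show (⟨i.val, by have := i.isLt; omega⟩ : Fin (m+3)).val ≤ m by
        show i.val ≤ m; have := i.isLt; omega)]
    · show eBinv m t (.inl ⟨.inr (.inl ⟨j.val, _⟩), _⟩) = _
      simp only [eBinv]
      erw [dif_pos (show (⟨j.val, by have := j.isLt; omega⟩ : Fin (m+2)).val ≤ m by
        show j.val ≤ m; have := j.isLt; omega)]
    · exact absurd (loopR_eq u) h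
    · match jv, hjv with
      | 0, hjv => exact absurd (tailR_eq0 _ rfl) h
      | jv+1, hjv => rfl
    · have h2 : i.val = m + 1 := inlW_val (show (Sum.inl i : (Dg m (t+1)).V) = wD m (t+1) from he)
      have h3 : i = ⟨m+1, Nat.lt_succ_self (m+1)⟩ := Fin.ext h2
      subst h3
      match bv, hb with
      | 0, hb =>
        show eBinv m t (.inl ⟨.inl (⟨m+1, _⟩, n), _⟩) = _
        simp only [eBinv]
        erw [dif_neg (show ¬ (⟨m+1, by omega⟩ : Fin (m+3)).val ≤ m by show ¬ m+1 ≤ m; omega),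
          dif_pos (show m + 1 = m + 1 from rfl)]
        rfl
      | 1, hb =>
        show eBinv m t (.inl ⟨.inl (⟨m+2, _⟩, n), _⟩) = _
        simp only [eBinv]
        erw [dif_neg (show ¬ (⟨m+2, by omega⟩ : Fin (m+3)).val ≤ m by show ¬ m+2 ≤ m; omega),
          dif_neg (show ¬ (⟨m+2, by omega⟩ : Fin (m+3)).val = m + 1 by show ¬ m+2 = m+1; omega)]
        rfl
    · exact absurd he (chainR_ne j)
    · match bv, hb with
      | 0, hb => rfl
      | 1, hb => rfl
    · have h2 : j.val = 0 := tailR_val j he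
      have h3 : j = ⟨0, Nat.succ_pos t⟩ := Fin.ext h2
      subst h3
      match bv, hb with
      | 0, hb => rfl
      | 1, hb => rfl
  · -- edge right inverse
    rintro (⟨(⟨i, n⟩ | (j | (u | j))), h⟩ | ⟨⟨(⟨i, n⟩ | (j | (u | j))), hs⟩, cv, hc⟩)
    · simp only [eBinv]
      by_cases hi : i.val ≤ m
      · erw [dif_pos hi]; rfl
      · by_cases hi2 : i.val = m + 1
        · erw [dif_neg hi, dif_pos hi2]
          exact congrArg Sum.inl (Subtype.ext (congrArg Sum.inl
            (Prod.ext (Fin.ext (show m + 1 = i.val by omega)) rfl)))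
        · erw [dif_neg hi, dif_neg hi2]
          exact congrArg Sum.inl (Subtype.ext (congrArg Sum.inl
            (Prod.ext (Fin.ext (show m + 2 = i.val by have := i.isLt; omega)) rfl)))
    · have hj : j.val ≤ m := by
        have : j.val ≠ m + 1 := fun hv => h (chainS_eq j hv)
        have := j.isLt
        omega
      simp only [eBinv]
      erw [dif_pos hj]
      rfl
    · exact absurd (loopS_eq u) h
    · rfl
    · exact absurd hs (HS_ne _ _)
    · have h2 : j.val = m + 1 := chainS_val j hs
      have h3 : j = ⟨m+1, Nat.lt_succ_self (m+1)⟩ := Fin.ext h2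
      subst h3
      match cv, hc with
      | 0, hc => rfl
      | 1, hc => rfl
    · match cv, hc with
      | 0, hc => rfl
      | 1, hc => rfl
    · exact absurd hs (tailS_ne _)
  · -- s intertwine
    rintro (⟨(⟨i, n⟩ | (j | (u | ⟨jv, hjv⟩))), h⟩ | ⟨⟨(⟨i, n⟩ | (j | (u | j))), he⟩, bv, hb⟩)
    · rw [outsplit_s_inl_neg _ _ _ _ _ _ (HS_ne i n)]
      rfl
    · by_cases hj : j.val = m
      · rw [outsplit_s_inl_pos _ _ _ _ _ _ (chainS_eq j hj)]
        exact congrArg Sum.inl (Subtype.ext (congrArg Sum.inl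
          (Fin.ext (show j.val + 1 = m + 1 by omega))))
      · rw [outsplit_s_inl_neg _ _ _ _ _ _ (chainS_ne j hj)]
        rfl
    · exact absurd rfl h
    · match jv, hjv with
      | 0, hjv => exact absurd (tailR_eq0 _ rfl) h
      | jv+1, hjv =>
        rw [outsplit_s_inl_neg _ _ _ _ _ _ (tailS_ne _)]
        rfl
    · match bv, hb with
      | 0, hb =>
        rw [outsplit_s_inr_neg _ _ _ _ _ _ _ (HS_ne i n)]
        rfl
      | 1, hb =>
        rw [outsplit_s_inr_neg _ _ _ _ _ _ _ (HS_ne i n)]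
        rfl
    · exact absurd he (chainR_ne j)
    · match bv, hb with
      | 0, hb =>
        rw [outsplit_s_inr_pos _ _ _ _ _ _ _ (loopS_eq u)]
        rfl
      | 1, hb =>
        rw [outsplit_s_inr_pos _ _ _ _ _ _ _ (loopS_eq u)]
        rfl
    · have h2 : j.val = 0 := tailR_val j he
      have h3 : j = ⟨0, Nat.succ_pos t⟩ := Fin.ext h2
      subst h3
      match bv, hb with
      | 0, hb =>
        rw [outsplit_s_inr_neg _ _ _ _ _ _ _ (tailS_ne _)]
        rfl
      | 1, hb =>
        rw [outsplit_s_inr_neg _ _ _ _ _ _ _ (tailS_ne _)]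
        rfl
  · -- r intertwine
    rintro (⟨(⟨i, n⟩ | (j | (u | ⟨jv, hjv⟩))), h⟩ | ⟨⟨(⟨i, n⟩ | (j | (u | j))), he⟩, bv, hb⟩)
    · refine ((insplit_r_inl_neg _ _ _ _ _ _
        (HR_ne ⟨i.val, by have := i.isLt; omega⟩ n
          (by show ¬ i.val = m + 2; have := i.isLt; omega))).trans ?_)
      rfl
    · refine ((insplit_r_inl_neg _ _ _ _ _ _
        (chainR_ne (⟨j.val, by have := j.isLt; omega⟩ : Fin (m+2)))).trans ?_)
      rfl
    · exact absurd rfl h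
    · match jv, hjv with
      | 0, hjv => exact absurd (tailR_eq0 _ rfl) h
      | jv+1, hjv =>
        match jv with
        | 0 =>
          refine ((insplit_r_inl_pos _ _ _ _ _ _
            (tailR_eq0 (⟨0, by omega⟩ : Fin t) rfl)).trans ?_)
          rfl
        | jv'+1 =>
          refine ((insplit_r_inl_neg _ _ _ _ _ _
            (tailR_ne (⟨jv'+1, by omega⟩ : Fin t) (by show ¬ jv' + 1 = 0; omega))).trans ?_)
          rfl
    · match bv, hb with
      | 0, hb =>
        refine ((insplit_r_inl_neg _ _ _ _ _ _
          (HR_ne ⟨m+1, by omega⟩ n (by show ¬ m+1 = m+2; omega))).trans ?_)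
        rfl
      | 1, hb =>
        refine ((insplit_r_inl_pos _ _ _ _ _ _
          (HR_eq (⟨m+2, by omega⟩ : Fin (m+3)) n rfl)).trans ?_)
        rfl
    · exact absurd he (chainR_ne j)
    · match bv, hb with
      | 0, hb =>
        refine ((insplit_r_inr_neg _ _ _ _ _ _ _
          (chainR_ne (⟨m+1, by omega⟩ : Fin (m+2)))).trans ?_)
        rfl
      | 1, hb =>
        refine ((insplit_r_inr_pos _ _ _ _ _ _ _ (loopR_eq ())).trans ?_)
        rfl
    · have h2 : j.val = 0 := tailR_val j he
      have h3 : j = ⟨0, Nat.succ_pos t⟩ := Fin.ext h2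
      subst h3
      match bv, hb with
      | 0, hb =>
        refine ((insplit_r_inr_neg _ _ _ _ _ _ _
          (chainR_ne (⟨m+1, by omega⟩ : Fin (m+2)))).trans ?_)
        rfl
      | 1, hb =>
        refine ((insplit_r_inr_pos _ _ _ _ _ _ _ (loopR_eq ())).trans ?_)
        rfl

end CKGraph
namespace CKGraph

lemma w0Ne {k a : ℕ} (ha : a < k + 1) (h : a ≠ 0) : (⟨a, ha⟩ : (Tgraph k).V) ≠ w0 k := by
  intro hh
  injection hh with h2
  exact h h2

lemma tS_ne {k : ℕ} (jj : {j : Fin (k+1) // 0 < j.val}) :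
    (Tgraph k).s (.inr jj) ≠ w0 k := by
  intro hh
  have h2 : jj.1.val = 0 :=
    (congrArg Fin.val hh : ((Tgraph k).s (.inr jj)).val = (w0 k).val)
  have := jj.2
  omega

lemma tR_eq {k : ℕ} (jj : {j : Fin (k+1) // 0 < j.val}) (h1 : jj.1.val = 1) :
    (Tgraph k).r (.inr jj) = w0 k :=
  Fin.ext (show jj.1.val - 1 = 0 by omega)

lemma tR_ne {k : ℕ} (jj : {j : Fin (k+1) // 0 < j.val}) (h2 : 2 ≤ jj.1.val) :
    (Tgraph k).r (.inr jj) ≠ w0 k := by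
  intro hh
  have h3 : jj.1.val - 1 = 0 :=
    (congrArg Fin.val hh : ((Tgraph k).r (.inr jj)).val = (w0 k).val)
  omega

lemma tR_val {k : ℕ} (jj : {j : Fin (k+1) // 0 < j.val})
    (h : (Tgraph k).r (.inr jj) = w0 k) : jj.1.val = 1 := by
  have h3 : jj.1.val - 1 = 0 :=
    (congrArg Fin.val h : ((Tgraph k).r (.inr jj)).val = (w0 k).val)
  have := jj.2
  omega

def vAfun (k : ℕ) : ((Tgraph (k+1)).outsplit (w0 (k+1)) 2 (PT (k+1))).V →
    ((Dg 0 k).insplit (wD 0 k) 2 (QI 0 k)).V := fun v =>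
  match v with
  | .inl ⟨⟨0, _⟩, h⟩ => absurd rfl h
  | .inl ⟨⟨1, _⟩, _⟩ => .inr 1
  | .inl ⟨⟨vv+2, hv⟩, _⟩ => .inl ⟨.inr ⟨vv, by omega⟩, inrVNe _⟩
  | .inr ⟨0, _⟩ => .inl ⟨.inl ⟨0, by omega⟩, inlNe (by omega) (by omega)⟩
  | .inr ⟨_+1, _⟩ => .inr 0

def vAinv (k : ℕ) : ((Dg 0 k).insplit (wD 0 k) 2 (QI 0 k)).V →
    ((Tgraph (k+1)).outsplit (w0 (k+1)) 2 (PT (k+1))).V := fun v =>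
  match v with
  | .inl ⟨.inl _, _⟩ => .inr 0
  | .inl ⟨.inr j, _⟩ => .inl ⟨⟨j.val + 2, by have := j.isLt; omega⟩, w0Ne _ (by omega)⟩
  | .inr ⟨0, _⟩ => .inr 1
  | .inr ⟨_+1, _⟩ => .inl ⟨⟨1, by omega⟩, w0Ne _ (by omega)⟩

def eAfun (k : ℕ) : ((Tgraph (k+1)).outsplit (w0 (k+1)) 2 (PT (k+1))).E →
    ((Dg 0 k).insplit (wD 0 k) 2 (QI 0 k)).E := fun e =>
  match e with
  | .inl ⟨.inl _, h⟩ => absurd rfl h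
  | .inl ⟨.inr ⟨⟨0, _⟩, hj⟩, _⟩ => absurd hj (lt_irrefl 0)
  | .inl ⟨.inr ⟨⟨1, _⟩, _⟩, h⟩ => absurd rfl h
  | .inl ⟨.inr ⟨⟨jv+2, hv⟩, _⟩, _⟩ => .inl ⟨.inr (.inr (.inr ⟨jv, by omega⟩)), tailS_ne _⟩
  | .inr (⟨.inl 0, _⟩, ⟨0, _⟩) => .inr (⟨.inr (.inl ⟨0, by omega⟩), chainS_eq _ rfl⟩, 0)
  | .inr (⟨.inl 0, _⟩, ⟨_+1, _⟩) => .inr (⟨.inr (.inr (.inl ())), loopS_eq ()⟩, 0)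
  | .inr (⟨.inl (n+1), _⟩, ⟨0, _⟩) => .inl ⟨.inl (⟨0, by omega⟩, n), HS_ne _ _⟩
  | .inr (⟨.inl (n+1), _⟩, ⟨_+1, _⟩) => .inl ⟨.inl (⟨1, by omega⟩, n), HS_ne _ _⟩
  | .inr (⟨.inr _, _⟩, ⟨0, _⟩) => .inr (⟨.inr (.inl ⟨0, by omega⟩), chainS_eq _ rfl⟩, 1)
  | .inr (⟨.inr _, _⟩, ⟨_+1, _⟩) => .inr (⟨.inr (.inr (.inl ())), loopS_eq ()⟩, 1)

def eAinv (k : ℕ) : ((Dg 0 k).insplit (wD 0 k) 2 (QI 0 k)).E →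
    ((Tgraph (k+1)).outsplit (w0 (k+1)) 2 (PT (k+1))).E := fun e =>
  match e with
  | .inl ⟨.inl (i, n), _⟩ => .inr (⟨.inl (n+1), rfl⟩, ⟨i.val, by have := i.isLt; omega⟩)
  | .inl ⟨.inr (.inl j), h⟩ => absurd (chainS_eq j (by have := j.isLt; omega)) h
  | .inl ⟨.inr (.inr (.inl u)), h⟩ => absurd (loopS_eq u) h
  | .inl ⟨.inr (.inr (.inr j)), _⟩ =>
      .inl ⟨.inr ⟨⟨j.val + 2, by have := j.isLt; omega⟩, by show 0 < j.val + 2; omega⟩,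
        tR_ne _ (by show 2 ≤ j.val + 2; omega)⟩
  | .inr (⟨.inl (_, _), hs⟩, _) => absurd hs (HS_ne _ _)
  | .inr (⟨.inr (.inl _), _⟩, ⟨0, _⟩) => .inr (⟨.inl 0, rfl⟩, 0)
  | .inr (⟨.inr (.inl _), _⟩, ⟨_+1, _⟩) =>
      .inr (⟨.inr ⟨⟨1, by omega⟩, Nat.one_pos⟩, tR_eq _ rfl⟩, 0)
  | .inr (⟨.inr (.inr (.inl _)), _⟩, ⟨0, _⟩) => .inr (⟨.inl 0, rfl⟩, 1)
  | .inr (⟨.inr (.inr (.inl _)), _⟩, ⟨_+1, _⟩) =>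
      .inr (⟨.inr ⟨⟨1, by omega⟩, Nat.one_pos⟩, tR_eq _ rfl⟩, 1)
  | .inr (⟨.inr (.inr (.inr j)), hs⟩, _) => absurd hs (tailS_ne _)

set_option maxHeartbeats 2000000 in
lemma isoA (k : ℕ) : Iso ((Tgraph (k+1)).outsplit (w0 (k+1)) 2 (PT (k+1)))
    ((Dg 0 k).insplit (wD 0 k) 2 (QI 0 k)) := by
  refine ⟨⟨vAfun k, vAinv k, ?_, ?_⟩, ⟨eAfun k, eAinv k, ?_, ?_⟩, ?_, ?_⟩
  · -- vertex left inverse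
    rintro (⟨⟨vv, hv⟩, h⟩ | ⟨bv, hb⟩)
    · match vv, hv with
      | 0, hv => exact absurd rfl h
      | 1, hv => rfl
      | vv+2, hv => rfl
    · match bv, hb with
      | 0, hb => rfl
      | 1, hb => rfl
  · -- vertex right inverse
    rintro (⟨(i | j), h⟩ | ⟨cv, hc⟩)
    · have hv : i.val ≠ 1 := fun hv => h (inlEq i.isLt hv)
      exact congrArg Sum.inl (Subtype.ext (congrArg Sum.inl
        (Fin.ext (show 0 = i.val by have := i.isLt; omega))))
    · rfl
    · match cv, hc with
      | 0, hc => rfl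
      | 1, hc => rfl
  · -- edge left inverse
    rintro (⟨(n | ⟨⟨jv, hv⟩, hj⟩), h⟩ | ⟨⟨(n | ⟨⟨jv, hv⟩, hj⟩), he⟩, bv, hb⟩)
    · exact absurd rfl h
    · match jv, hv, hj with
      | 0, hv, hj => exact absurd hj (lt_irrefl 0)
      | 1, hv, hj => exact absurd rfl h
      | jv+2, hv, hj => rfl
    · match n, bv, hb with
      | 0, 0, hb => rfl
      | 0, 1, hb => rfl
      | n+1, 0, hb => rfl
      | n+1, 1, hb => rfl
    · have h1 : jv = 1 := tR_val ⟨⟨jv, hv⟩, hj⟩ he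
      subst h1
      match bv, hb with
      | 0, hb => rfl
      | 1, hb => rfl
  · -- edge right inverse
    rintro (⟨(⟨i, n⟩ | (j | (u | j))), h⟩ | ⟨⟨(⟨i, n⟩ | (j | (u | j))), hs⟩, cv, hc⟩)
    · rcases i with ⟨iv, hiv⟩
      match iv, hiv with
      | 0, hiv => rfl
      | 1, hiv => rfl
    · exact absurd (chainS_eq j (by have := j.isLt; omega)) h
    · exact absurd (loopS_eq u) h
    · rfl
    · exact absurd hs (HS_ne _ _)
    · rcases j with ⟨jv, hjv⟩
      match jv, hjv with
      | 0, hjv =>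
        match cv, hc with
        | 0, hc => rfl
        | 1, hc => rfl
    · match cv, hc with
      | 0, hc => rfl
      | 1, hc => rfl
    · exact absurd hs (tailS_ne _)
  · -- s intertwine
    rintro (⟨(n | ⟨⟨jv, hv⟩, hj⟩), h⟩ | ⟨⟨(n | ⟨⟨jv, hv⟩, hj⟩), he⟩, bv, hb⟩)
    · exact absurd rfl h
    · match jv, hv, hj with
      | 0, hv, hj => exact absurd hj (lt_irrefl 0)
      | 1, hv, hj => exact absurd rfl h
      | jv+2, hv, hj =>
        rw [outsplit_s_inl_neg _ _ _ _ _ _ (tS_ne _)]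
        rfl
    · match n, bv, hb with
      | 0, 0, hb =>
        rw [outsplit_s_inr_pos _ _ _ _ _ _ _
          (show (Tgraph (k+1)).s (.inl 0) = w0 (k+1) from rfl)]
        rfl
      | 0, 1, hb =>
        rw [outsplit_s_inr_pos _ _ _ _ _ _ _
          (show (Tgraph (k+1)).s (.inl 0) = w0 (k+1) from rfl)]
        rfl
      | n+1, 0, hb =>
        rw [outsplit_s_inr_pos _ _ _ _ _ _ _
          (show (Tgraph (k+1)).s (.inl (n+1)) = w0 (k+1) from rfl)]
        rfl
      | n+1, 1, hb =>
        rw [outsplit_s_inr_pos _ _ _ _ _ _ _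
          (show (Tgraph (k+1)).s (.inl (n+1)) = w0 (k+1) from rfl)]
        rfl
    · have h1 : jv = 1 := tR_val ⟨⟨jv, hv⟩, hj⟩ he
      subst h1
      match bv, hb with
      | 0, hb =>
        rw [outsplit_s_inr_neg _ _ _ _ _ _ _ (tS_ne _)]
        rfl
      | 1, hb =>
        rw [outsplit_s_inr_neg _ _ _ _ _ _ _ (tS_ne _)]
        rfl
  · -- r intertwine
    rintro (⟨(n | ⟨⟨jv, hv⟩, hj⟩), h⟩ | ⟨⟨(n | ⟨⟨jv, hv⟩, hj⟩), he⟩, bv, hb⟩)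
    · exact absurd rfl h
    · match jv, hv, hj with
      | 0, hv, hj => exact absurd hj (lt_irrefl 0)
      | 1, hv, hj => exact absurd rfl h
      | 2, hv, hj =>
        refine ((insplit_r_inl_pos _ _ _ _ _ _
          (tailR_eq0 (⟨0, by omega⟩ : Fin k) rfl)).trans ?_)
        rfl
      | jv+3, hv, hj =>
        refine ((insplit_r_inl_neg _ _ _ _ _ _
          (tailR_ne (⟨jv+1, by omega⟩ : Fin k) (by show ¬ jv + 1 = 0; omega))).trans ?_)
        rfl
    · match n, bv, hb with
      | 0, 0, hb =>
        refine ((insplit_r_inr_neg _ _ _ _ _ _ _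
          (chainR_ne (⟨0, by omega⟩ : Fin 1))).trans ?_)
        rfl
      | 0, 1, hb =>
        refine ((insplit_r_inr_pos _ _ _ _ _ _ _ (loopR_eq ())).trans ?_)
        rfl
      | n+1, 0, hb =>
        refine ((insplit_r_inl_neg _ _ _ _ _ _
          (HR_ne (⟨0, by omega⟩ : Fin 2) n (by show ¬ (0:ℕ) = 1; omega))).trans ?_)
        rfl
      | n+1, 1, hb =>
        refine ((insplit_r_inl_pos _ _ _ _ _ _
          (HR_eq (⟨1, by omega⟩ : Fin 2) n rfl)).trans ?_)
        rfl
    · have h1 : jv = 1 := tR_val ⟨⟨jv, hv⟩, hj⟩ he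
      subst h1
      match bv, hb with
      | 0, hb =>
        refine ((insplit_r_inr_neg _ _ _ _ _ _ _
          (chainR_ne (⟨0, by omega⟩ : Fin 1))).trans ?_)
        rfl
      | 1, hb =>
        refine ((insplit_r_inr_pos _ _ _ _ _ _ _ (loopR_eq ())).trans ?_)
        rfl

end CKGraph
namespace CKGraph

lemma sFiber_classify {m t : ℕ} (e : {e : (Dg m t).E // (Dg m t).s e = wD m t}) :
    e = ⟨.inr (.inl ⟨m, Nat.lt_succ_self m⟩), chainS_eq _ rfl⟩ ∨
    e = ⟨.inr (.inr (.inl ())), loopS_eq ()⟩ := by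
  obtain ⟨e, he⟩ := e
  rcases e with ⟨i, n⟩ | (j | (u | j))
  · exact absurd he (HS_ne _ _)
  · left
    exact Subtype.ext (congrArg (fun x => Sum.inr (Sum.inl x)) (Fin.ext (chainS_val j he)))
  · right
    rfl
  · exact absurd he (tailS_ne _)

lemma sFiber_finite (m t : ℕ) : Finite {e : (Dg m t).E // (Dg m t).s e = wD m t} := by
  refine Finite.of_injective (fun e => PO m t e) ?_
  intro a b hab
  rcases sFiber_classify a with ha | ha <;> rcases sFiber_classify b with hb | hb <;>
    subst ha <;> subst hb
  · rfl
  · exact absurd hab (show ¬ (0 : Fin 2) = 1 by decide)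
  · exact absurd hab (show ¬ (1 : Fin 2) = 0 by decide)
  · rfl

lemma PO_surj (m t : ℕ) : Function.Surjective (PO m t) := by
  rintro ⟨bv, hb⟩
  match bv, hb with
  | 0, hb => exact ⟨⟨.inr (.inl ⟨m, Nat.lt_succ_self m⟩), chainS_eq _ rfl⟩, rfl⟩
  | 1, hb => exact ⟨⟨.inr (.inr (.inl ())), loopS_eq ()⟩, rfl⟩

lemma PO_infcond (m t : ℕ) :
    ∀ i j : Fin 2, {e | PO m t e = i}.Infinite → {e | PO m t e = j}.Infinite → i = j := by
  haveI := sFiber_finite m t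
  intro i j hi _
  exact absurd hi (Set.toFinite _).not_infinite

lemma topRegular (m t : ℕ) : (Dg m t).Regular (wD m t) :=
  ⟨⟨⟨.inr (.inr (.inl ())), loopS_eq ()⟩⟩, sFiber_finite m t⟩

lemma PT_surj (k : ℕ) : Function.Surjective (PT k) := by
  rintro ⟨bv, hb⟩
  match bv, hb with
  | 0, hb => exact ⟨⟨.inl 1, rfl⟩, rfl⟩
  | 1, hb => exact ⟨⟨.inl 0, rfl⟩, rfl⟩

lemma PT_fiber1_finite (k : ℕ) : {e | PT k e = (1 : Fin 2)}.Finite := by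
  apply Set.Subsingleton.finite
  rintro ⟨e1, h1⟩ hm1 ⟨e2, h2⟩ hm2
  have he1 : e1 = Sum.inl 0 := by
    rcases e1 with (_ | n) | j
    · rfl
    · exact absurd hm1 (show ¬ (0 : Fin 2) = 1 by decide)
    · exact absurd hm1 (show ¬ (0 : Fin 2) = 1 by decide)
  have he2 : e2 = Sum.inl 0 := by
    rcases e2 with (_ | n) | j
    · rfl
    · exact absurd hm2 (show ¬ (0 : Fin 2) = 1 by decide)
    · exact absurd hm2 (show ¬ (0 : Fin 2) = 1 by decide)
  subst he1; subst he2; rfl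

lemma PT_infcond (k : ℕ) :
    ∀ i j : Fin 2, {e | PT k e = i}.Infinite → {e | PT k e = j}.Infinite → i = j := by
  intro i j hi hj
  by_cases hij : i = j
  · exact hij
  exfalso
  have h1 : i = 1 ∨ j = 1 := by
    have hi2 := i.isLt
    have hj2 := j.isLt
    have hne : i.val ≠ j.val := fun hh => hij (Fin.ext hh)
    have : i.val = 1 ∨ j.val = 1 := by omega
    rcases this with h | h
    · exact Or.inl (Fin.ext h)
    · exact Or.inr (Fin.ext h)
  rcases h1 with h1 | h1 <;> subst h1
  · exact (PT_fiber1_finite k).not_infinite hi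
  · exact (PT_fiber1_finite k).not_infinite hj

end CKGraph
namespace CKGraph

lemma stepA (k : ℕ) :
    MoveO (Tgraph (k+1)) ((Tgraph (k+1)).outsplit (w0 (k+1)) 2 (PT (k+1))) :=
  ⟨w0 (k+1), 2, PT (k+1), ⟨⟨.inl 0, rfl⟩⟩, PT_surj (k+1), PT_infcond (k+1), iso_refl _⟩

lemma stepA' (k : ℕ) :
    MoveIm (Dg 0 k) ((Tgraph (k+1)).outsplit (w0 (k+1)) 2 (PT (k+1))) :=
  ⟨wD 0 k, 2, QI 0 k, topRegular 0 k, by omega, iso_symm (isoA k)⟩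

lemma stepB (m t : ℕ) :
    MoveO (Dg m (t+1)) ((Dg m (t+1)).outsplit (wD m (t+1)) 2 (PO m (t+1))) :=
  ⟨wD m (t+1), 2, PO m (t+1), ⟨⟨.inr (.inr (.inl ())), loopS_eq ()⟩⟩,
    PO_surj m (t+1), PO_infcond m (t+1), iso_refl _⟩

lemma stepB' (m t : ℕ) :
    MoveIm (Dg (m+1) t) ((Dg m (t+1)).outsplit (wD m (t+1)) 2 (PO m (t+1))) :=
  ⟨wD (m+1) t, 2, QI (m+1) t, topRegular (m+1) t, by omega, iso_symm (isoB m t)⟩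

lemma stepC (m : ℕ) : MoveO (Dg m 0) (Dg (m+1) 0) :=
  ⟨wD m 0, 2, PO m 0, ⟨⟨.inr (.inr (.inl ())), loopS_eq ()⟩⟩,
    PO_surj m 0, PO_infcond m 0, isoC m⟩

lemma stepD : MoveO (Tgraph 0) (Dg 0 0) :=
  ⟨w0 0, 2, PT 0, ⟨⟨.inl 0, rfl⟩⟩, PT_surj 0, PT_infcond 0, isoD⟩

end CKGraph

theorem Tgraph_moveEquiv_O_Iminus' (k : ℕ) :
    MoveEquiv (fun A B => MoveO A B ∨ MoveIm A B) (Tgraph k) (Tgraph 0) := by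
  set rel : CKGraph → CKGraph → Prop := fun A B =>
    (MoveO A B ∨ MoveIm A B) ∨ (MoveO B A ∨ MoveIm B A) with hrel
  rcases k with _ | k
  · exact ⟨Tgraph 0, .refl, iso_refl _⟩
  have h1 : Relation.ReflTransGen rel (Tgraph (k+1)) (Dg 0 k) :=
    Relation.ReflTransGen.tail (Relation.ReflTransGen.single (Or.inl (Or.inl (stepA k))))
      (Or.inr (Or.inr (stepA' k)))
  have hup : ∀ t m : ℕ, Relation.ReflTransGen rel (Dg m t) (Dg (m+t) 0) := by
    intro t
    induction t with
    | zero => intro m; exact .refl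
    | succ t ih =>
      intro m
      have h2 : Relation.ReflTransGen rel (Dg m (t+1)) (Dg (m+1) t) :=
        Relation.ReflTransGen.tail
          (Relation.ReflTransGen.single (Or.inl (Or.inl (stepB m t))))
          (Or.inr (Or.inr (stepB' m t)))
      have h3 := ih (m+1)
      rw [show m + 1 + t = m + (t + 1) by omega] at h3
      exact h2.trans h3
  have hdown : ∀ m : ℕ, Relation.ReflTransGen rel (Dg m 0) (Dg 0 0) := by
    intro m
    induction m with
    | zero => exact .refl
    | succ m ih =>
      exact (Relation.ReflTransGen.single
        (show rel (Dg (m+1) 0) (Dg m 0) from Or.inr (Or.inl (stepC m)))).trans ih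
  have h4 : Relation.ReflTransGen rel (Dg 0 0) (Tgraph 0) :=
    Relation.ReflTransGen.single (show rel (Dg 0 0) (Tgraph 0) from Or.inr (Or.inl stepD))
  have h5 := hup k 0
  rw [show 0 + k = k from by omega] at h5
  exact ⟨Tgraph 0, ((h1.trans h5).trans (hdown k)).trans h4, iso_refl _⟩
/-- For every `k ≥ 0`, the graph `T_k` (a head with countably
infinitely many loops and a tail of length `k`) is move equivalent via the
moves (O) and (I-) to `T₀`, a single vertex with countably infinitely many
loops. -/
theorem Tgraph_moveEquiv_O_Iminus (k : ℕ) :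
    MoveEquiv (fun A B => MoveO A B ∨ MoveIm A B) (Tgraph k) (Tgraph 0) := by
  exact Tgraph_moveEquiv_O_Iminus' k
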